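/- As β → +∞, σ_β(A_{r,R}) converges to the first Steklov-Dirichlet eigenvalue σ_D(A_{r,R}), which equals 1/(R log(R/r)) for n = 2 and (n−2)/(R((R/r)^{n−2} − 1)) for n ≥ 3. -/
import Mathlib


open Filter

/-- The explicit first Steklov–Robin eigenvalue of the spherical shell `A_{r,R} ⊂ ℝⁿ`
with constant Robin parameter `β` on the inner sphere. -/
noncomputable def sigmaShell (n : ℕ) (r R β : ℝ) : ℝ :=
  if n = 2 then 1 / (R / (β * r) + R * Real.log (R / r))
  else ((n : ℝ) - 2) /
    (((n : ℝ) - 2) / β * (R / r) ^ (n - 2) + R * ((R / r) ^ (n - 2) - 1))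

/-- The explicit first Steklov–Dirichlet eigenvalue of the spherical shell. -/
noncomputable def sigmaDShell (n : ℕ) (r R : ℝ) : ℝ :=
  if n = 2 then 1 / (R * Real.log (R / r))
  else ((n : ℝ) - 2) / (R * ((R / r) ^ (n - 2) - 1))

/-- as `β → +∞`, `σ_β(A_{r,R})` converges to the first Steklov–Dirichlet
eigenvalue `σ_D(A_{r,R})`. -/
theorem sigmaShell_tendsto_sigmaD (n : ℕ) (hn : 2 ≤ n) (r R : ℝ)
    (hr : 0 < r) (hrR : r < R) :
    Tendsto (fun β : ℝ => sigmaShell n r R β) atTop (nhds (sigmaDShell n r R)) := by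
  have hR : 0 < R := hr.trans hrR
  have hratio : 1 < R / r := (one_lt_div hr).mpr hrR
  unfold sigmaShell sigmaDShell
  by_cases h2 : n = 2
  · simp only [h2, if_pos rfl]
    have hlog : 0 < Real.log (R / r) := Real.log_pos hratio
    have hC : R * Real.log (R / r) ≠ 0 := by positivity
    have h1 : Tendsto (fun β : ℝ => R / (β * r)) atTop (nhds 0) := by
      have h0 : Tendsto (fun β : ℝ => β * r) atTop atTop :=
        Tendsto.atTop_mul_const hr tendsto_id
      have := h0.inv_tendsto_atTop.const_mul R
      simpa [div_eq_mul_inv, mul_zero] using this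
    have hD : Tendsto (fun β : ℝ => R / (β * r) + R * Real.log (R / r)) atTop
        (nhds (R * Real.log (R / r))) := by
      simpa using h1.add_const (R * Real.log (R / r))
    have := Tendsto.div (tendsto_const_nhds (x := (1 : ℝ))) hD hC
    simpa [Pi.div_def] using this
  · simp only [if_neg h2]
    have hn3 : 3 ≤ n := by omega
    have hpow : 1 < (R / r) ^ (n - 2) := one_lt_pow₀ hratio (by omega)
    have hC : R * ((R / r) ^ (n - 2) - 1) ≠ 0 := by
      have : (0:ℝ) < (R / r) ^ (n - 2) - 1 := by linarith
      positivity
    have h1 : Tendsto (fun β : ℝ => ((n : ℝ) - 2) / β * (R / r) ^ (n - 2)) atTop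
        (nhds 0) := by
      have h0 : Tendsto (fun β : ℝ => ((n : ℝ) - 2) / β) atTop (nhds 0) := by
        have := (tendsto_id (α := ℝ) (x := atTop)).inv_tendsto_atTop.const_mul ((n : ℝ) - 2)
        simpa [div_eq_mul_inv, mul_zero] using this
      simpa using h0.mul_const ((R / r) ^ (n - 2))
    have hD : Tendsto (fun β : ℝ => ((n : ℝ) - 2) / β * (R / r) ^ (n - 2)
        + R * ((R / r) ^ (n - 2) - 1)) atTop (nhds (R * ((R / r) ^ (n - 2) - 1))) := by
      simpa using h1.add_const (R * ((R / r) ^ (n - 2) - 1))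
    have := Tendsto.div (tendsto_const_nhds (x := ((n : ℝ) - 2))) hD hC
    simpa [Pi.div_def] using this
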